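/- Let T > 0 and d > 0 be real numbers and let r be a positive natural number. Let S ⊆ ℕ be a set of indices such that for every m ∈ ℕ the set {m, m+1, …, m+r−1} contains an element of S (in every r consecutive messages at least one is privileged). Let a : ℕ → ℝ be such that for every k ∈ S, k·T ≤ a(k) ≤ k·T + d (a privileged message sent at time k·T is delivered within d). Then for every real t ≥ 0 there exists k ∈ S with t < a(k) ≤ t + (r+1)·T + d. (This expresses Lemma 1: there is an upper bound of (r+1)·T + d on the inter-arrival time of heartbeats over an ADD channel.) -/
import Mathlib


/-- Lemma 1 (ADD channel heartbeat bound): if among every `r` consecutive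
messages at least one is privileged (in `S`), and every privileged message `k`
(sent at time `k·T`) is delivered at time `a k` with `k·T ≤ a k ≤ k·T + d`,
then for every time `t ≥ 0` some privileged message arrives in the interval
`(t, t + (r+1)·T + d]`. -/
theorem add_channel_interarrival_bound
    (T d : ℝ) (hT : 0 < T) (hd : 0 < d)
    (r : ℕ) (hr : 0 < r)
    (S : Set ℕ)
    (hS : ∀ m : ℕ, ∃ k ∈ S, m ≤ k ∧ k < m + r)
    (a : ℕ → ℝ)
    (ha : ∀ k ∈ S, (k : ℝ) * T ≤ a k ∧ a k ≤ (k : ℝ) * T + d)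
    (t : ℝ) (ht : 0 ≤ t) :
    ∃ k ∈ S, t < a k ∧ a k ≤ t + ((r : ℝ) + 1) * T + d := by
  set m : ℕ := ⌊t / T⌋.toNat + 1 with hm
  obtain ⟨k, hkS, hmk, hkmr⟩ := hS m
  obtain ⟨h1, h2⟩ := ha k hkS
  refine ⟨k, hkS, ?_, ?_⟩
  · have hfl : 0 ≤ ⌊t / T⌋ := Int.floor_nonneg.mpr (div_nonneg ht hT.le)
    have hcast : ((⌊t / T⌋.toNat : ℕ) : ℝ) = ((⌊t / T⌋ : ℤ) : ℝ) := by
      exact_mod_cast Int.toNat_of_nonneg hfl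
    have hmgt : t / T < (m : ℝ) := by
      have := Int.lt_floor_add_one (t / T)
      push_cast [hm]
      linarith
    have : t < (m : ℝ) * T := by
      rw [← div_lt_iff₀ hT] at *
      exact hmgt
    have hkm : (m : ℝ) * T ≤ (k : ℝ) * T := by
      have : (m : ℝ) ≤ (k : ℝ) := by exact_mod_cast hmk
      nlinarith
    linarith
  · have hfle : (⌊t / T⌋ : ℝ) ≤ t / T := Int.floor_le _
    have hfl : 0 ≤ ⌊t / T⌋ := Int.floor_nonneg.mpr (div_nonneg ht hT.le)
    have hk : (k : ℝ) ≤ t / T + r := by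
      have : (k : ℝ) ≤ (m : ℝ) + r - 1 := by
        have : k ≤ m + r - 1 := by omega
        have := (Nat.cast_le (α := ℝ)).mpr this
        push_cast [Nat.cast_sub (by omega : 1 ≤ m + r)] at this ⊢
        linarith
      have hcast : ((⌊t / T⌋.toNat : ℕ) : ℝ) = ((⌊t / T⌋ : ℤ) : ℝ) := by
        exact_mod_cast Int.toNat_of_nonneg hfl
      push_cast [hm] at this
      linarith
    have : (k : ℝ) * T ≤ (t / T + r) * T := by nlinarith
    have htT : (t / T) * T = t := div_mul_cancel₀ t hT.ne'
    nlinarith
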